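/- Let (Z_j)_{j≥0} be an i.i.d. sequence of ℝ^d-valued random vectors with E[log⁺‖Z₀‖] < ∞, and let P ∈ ℝ^{d×d} with ρ(P) < 1. Then almost surely ∑_{j=0}^∞ ‖P^j Z_j‖ < ∞. -/

import Mathlib

open MeasureTheory ProbabilityTheory Matrix Filter

/-- The spectral radius of a real `d × d` matrix: the supremum of the moduli of its complex
eigenvalues. -/
noncomputable def specRad {d : ℕ} (P : Matrix (Fin d) (Fin d) ℝ) : ℝ :=
  sSup ((fun z : ℂ => ‖z‖) '' spectrum ℂ (P.map (algebraMap ℝ ℂ)))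

/-- A real `d × d` matrix acting on Euclidean space. -/
noncomputable def mApp {d : ℕ} (P : Matrix (Fin d) (Fin d) ℝ)
    (x : EuclideanSpace ℝ (Fin d)) : EuclideanSpace ℝ (Fin d) :=
  Matrix.toEuclideanCLM (𝕜 := ℝ) P x

/-- `log⁺ x = max (log x) 0`. -/
noncomputable def logPlus (x : ℝ) : ℝ := max (Real.log x) 0

/-!
Gelfand's formula, applied to the complexification of `P`, gives `‖P ^ n‖ ≤ r ^ n` for all
large `n` whenever `ρ(P) < r`. On the probabilistic side, `log⁺ ‖Z₀‖ / log a` is integrable for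
`a > 1`, so `∑ ℙ(‖Z_j‖ > a ^ j) < ∞` since the `Z_j` share the law of `Z₀`; by Borel–Cantelli,
almost surely `‖Z_j‖ ≤ a ^ j` for all large `j`. Choosing `1 < a < 1 / r` dominates the series
by the geometric series of ratio `r a < 1`.
-/

open scoped ENNReal NNReal

theorem eventually_norm_pow_le_of_spectralRadius_lt {A : Type*} [NormedRing A]
    [NormedAlgebra ℂ A] [CompleteSpace A] (a : A) {r : ℝ≥0} (h : spectralRadius ℂ a < r) :
    ∀ᶠ n : ℕ in atTop, ‖a ^ n‖ ≤ r ^ n := by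
  filter_upwards [(spectrum.gelfand_formula a).eventually_lt_const h, eventually_gt_atTop 0]
    with n hn hn0
  rw [one_div, ENNReal.rpow_inv_lt_iff (by positivity), ENNReal.rpow_natCast] at hn
  exact_mod_cast hn.le

theorem spectralRadius_toEuclideanCLM_map_le_specRad {d : ℕ} (P : Matrix (Fin d) (Fin d) ℝ) :
    spectralRadius ℂ (toEuclideanCLM (𝕜 := ℂ) (P.map (algebraMap ℝ ℂ))) ≤
      ENNReal.ofReal (specRad P) := by
  rw [spectralRadius, AlgEquiv.spectrum_eq]
  refine iSup₂_le fun z hz => ?_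
  rw [← ENNReal.ofReal_coe_nnreal, coe_nnnorm]
  exact ENNReal.ofReal_le_ofReal <|
    le_csSup ((Matrix.finite_spectrum _).image _).bddAbove ⟨z, hz, rfl⟩

theorem norm_toLp_ofReal {d : ℕ} (x : EuclideanSpace ℝ (Fin d)) :
    ‖WithLp.toLp 2 (fun i => (x i : ℂ))‖ = ‖x‖ := by
  simp only [EuclideanSpace.norm_eq, Complex.norm_real]

theorem toLp_ofReal_mApp {d : ℕ} (A : Matrix (Fin d) (Fin d) ℝ) (x : EuclideanSpace ℝ (Fin d)) :
    WithLp.toLp 2 (fun i => (mApp A x i : ℂ)) =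
      toEuclideanCLM (𝕜 := ℂ) (A.map (algebraMap ℝ ℂ)) (WithLp.toLp 2 (fun i => (x i : ℂ))) := by
  ext i
  exact (algebraMap ℝ ℂ).map_mulVec A x i

theorem norm_mApp_le {d : ℕ} (A : Matrix (Fin d) (Fin d) ℝ) (x : EuclideanSpace ℝ (Fin d)) :
    ‖mApp A x‖ ≤ ‖toEuclideanCLM (𝕜 := ℂ) (A.map (algebraMap ℝ ℂ))‖ * ‖x‖ := by
  rw [← norm_toLp_ofReal (mApp A x), toLp_ofReal_mApp, ← norm_toLp_ofReal x]
  exact ContinuousLinearMap.le_opNorm _ _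

theorem specRad_nonneg {d : ℕ} (P : Matrix (Fin d) (Fin d) ℝ) : 0 ≤ specRad P :=
  Real.sSup_nonneg fun _ ⟨_, _, hz⟩ => hz ▸ norm_nonneg _

theorem eventually_norm_mApp_pow_le {d : ℕ} (P : Matrix (Fin d) (Fin d) ℝ) {r : ℝ}
    (hr : specRad P < r) : ∀ᶠ n : ℕ in atTop, ∀ x, ‖mApp (P ^ n) x‖ ≤ r ^ n * ‖x‖ := by
  have hr0 : 0 ≤ r := (specRad_nonneg P).trans hr.le
  have hρ : spectralRadius ℂ (toEuclideanCLM (𝕜 := ℂ) (P.map (algebraMap ℝ ℂ))) < r.toNNReal :=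
    (spectralRadius_toEuclideanCLM_map_le_specRad P).trans_lt <|
      (ENNReal.ofReal_lt_ofReal_iff_of_nonneg (specRad_nonneg P)).2 hr
  filter_upwards [eventually_norm_pow_le_of_spectralRadius_lt _ hρ] with n hn x
  rw [← map_pow, ← Matrix.map_pow, Real.coe_toNNReal r hr0] at hn
  exact (norm_mApp_le _ x).trans (by gcongr)

theorem logPlus_nonneg (x : ℝ) : 0 ≤ logPlus x := le_max_right _ _

theorem measurable_logPlus : Measurable logPlus := Real.measurable_log.max measurable_const

theorem le_pow_of_logPlus_le {a x : ℝ} (ha : 1 < a) {n : ℕ} (h : logPlus x ≤ n * Real.log a) :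
    x ≤ a ^ n := by
  rcases le_or_gt x 0 with hx | hx
  · exact hx.trans (by positivity)
  · rw [← Real.log_le_log_iff hx (by positivity), Real.log_pow]
    exact (le_max_left _ _).trans h

theorem ae_eventually_le_natCast_of_identDistrib {Ω : Type*} [MeasurableSpace Ω]
    {μ : Measure Ω} [IsProbabilityMeasure μ] {X : ℕ → Ω → ℝ}
    (hident : ∀ j, IdentDistrib (X j) (X 0) μ μ) (hint : Integrable (X 0) μ) (hnonneg : 0 ≤ X 0) :
    ∀ᵐ ω ∂μ, ∀ᶠ j : ℕ in atTop, X j ω ≤ j := by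
  have hsum : ∑' j : ℕ, μ (X j ⁻¹' Set.Ioi j) ≠ ⊤ := by
    rw [tsum_congr fun j => (hident j).measure_mem_eq measurableSet_Ioi]
    exact (@tsum_prob_mem_Ioi_lt_top Ω ⟨μ⟩ _ _ hint hnonneg).ne
  filter_upwards [ae_eventually_notMem hsum] with ω hω
  filter_upwards [hω] with j hj
  simpa using hj

theorem ae_eventually_norm_le_pow_of_identDistrib {Ω E : Type*} [MeasurableSpace Ω]
    {μ : Measure Ω} [IsProbabilityMeasure μ] [NormedAddCommGroup E] [MeasurableSpace E]
    [OpensMeasurableSpace E] {Z : ℕ → Ω → E} (hident : ∀ j, IdentDistrib (Z j) (Z 0) μ μ)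
    (hlog : ∫⁻ ω, ENNReal.ofReal (logPlus ‖Z 0 ω‖) ∂μ < ⊤) {a : ℝ} (ha : 1 < a) :
    ∀ᵐ ω ∂μ, ∀ᶠ j : ℕ in atTop, ‖Z j ω‖ ≤ a ^ j := by
  have hloga : 0 < Real.log a := Real.log_pos ha
  have hu : Measurable fun v : E => logPlus ‖v‖ / Real.log a :=
    (measurable_logPlus.comp measurable_norm).div_const _
  have hint : Integrable (fun ω => logPlus ‖Z 0 ω‖) μ :=
    (lintegral_ofReal_ne_top_iff_integrable
      (measurable_logPlus.comp_aemeasurable (hident 0).aemeasurable_fst.norm).aestronglyMeasurable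
      (Eventually.of_forall fun _ => logPlus_nonneg _)).1 hlog.ne
  filter_upwards [ae_eventually_le_natCast_of_identDistrib (fun j => (hident j).comp hu)
    (hint.div_const _) fun _ => div_nonneg (logPlus_nonneg _) hloga.le] with ω hω
  filter_upwards [hω] with j hj
  exact le_pow_of_logPlus_le ha ((div_le_iff₀ hloga).1 hj)

theorem summable_norm_pow_smul_of_iid_general {d : ℕ} {Ω : Type*} [MeasurableSpace Ω]
    (μ : Measure Ω) [IsProbabilityMeasure μ]
    (Z : ℕ → Ω → EuclideanSpace ℝ (Fin d))
    (hident : ∀ j, IdentDistrib (Z j) (Z 0) μ μ)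
    (P : Matrix (Fin d) (Fin d) ℝ) (hP : specRad P < 1)
    (hlog : ∫⁻ ω, ENNReal.ofReal (logPlus ‖Z 0 ω‖) ∂μ < ⊤) :
    ∀ᵐ ω ∂μ, Summable fun j : ℕ => ‖mApp (P ^ j) (Z j ω)‖ := by
  obtain ⟨r, hPr, hr1⟩ := exists_between hP
  have hr0 : 0 < r := (specRad_nonneg P).trans_lt hPr
  obtain ⟨a, ha1, har⟩ := exists_between ((one_lt_inv₀ hr0).2 hr1)
  have hra : r * a < 1 := by simpa [hr0.ne'] using mul_lt_mul_of_pos_left har hr0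
  filter_upwards [ae_eventually_norm_le_pow_of_identDistrib hident hlog ha1] with ω hω
  refine .of_norm_bounded_eventually_nat (summable_geometric_of_lt_one (by positivity) hra) ?_
  filter_upwards [hω, eventually_norm_mApp_pow_le P hPr] with j hZ hPj
  rw [norm_norm, mul_pow]
  exact (hPj _).trans (by gcongr)

theorem summable_norm_pow_smul_of_iid {d : ℕ} {Ω : Type*} [MeasurableSpace Ω]
    (μ : Measure Ω) [IsProbabilityMeasure μ]
    (Z : ℕ → Ω → EuclideanSpace ℝ (Fin d)) (hmeas : ∀ j, Measurable (Z j))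
    (hindep : iIndepFun Z μ)
    (hident : ∀ j, IdentDistrib (Z j) (Z 0) μ μ)
    (P : Matrix (Fin d) (Fin d) ℝ) (hP : specRad P < 1)
    (hlog : ∫⁻ ω, ENNReal.ofReal (logPlus ‖Z 0 ω‖) ∂μ < ⊤) :
    ∀ᵐ ω ∂μ, Summable fun j : ℕ => ‖mApp (P ^ j) (Z j ω)‖ :=
  summable_norm_pow_smul_of_iid_general μ Z hident P hP hlog
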